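/- arXiv:1411.1455 — 7 statements merged into one kernel-verified Lean document; each statement's English description precedes it below -/
import Mathlib

section
/- Suppose the ranking function s satisfies additivity. Let D be a finite database, v ∈ D, j ∈ I an attribute, and θ ∈ V j. Let q be a query that returns v, and let q' be the query agreeing with q on every attribute except j, with q' j = {θ}. If q' does not return v, then v j ≠ θ. (This is the 'differential queries' inference of Section 4.1: a pair of queries differing only on attribute j, one returning v and the other not, proves that v's value on j is not θ.) -/
open Finset

variable {I α : Type*}

/-- A query assigns to each attribute a nonempty subset of its domain. -/
def ValidQuery (V : I → Finset α) (q : I → Finset α) : Prop :=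
  ∀ i, (q i).Nonempty ∧ q i ⊆ V i

/-- A tuple takes a value in the domain of each attribute. -/
def ValidTuple (V : I → Finset α) (t : I → α) : Prop :=
  ∀ i, t i ∈ V i

/-- `q` returns `v` as the top-1 result over the database `D`. -/
def Returns (s : (I → Finset α) → (I → α) → ℝ) (D : Finset (I → α))
    (q : I → Finset α) (v : I → α) : Prop :=
  ∀ t ∈ D, t ≠ v → s q v < s q t

/-- Additivity of the ranking function `s`. -/
def RankAdditive [DecidableEq I] (V : I → Finset α)
    (s : (I → Finset α) → (I → α) → ℝ) : Prop :=
  ∀ (q : I → Finset α) (t t' : I → α) (j : I),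
    ValidQuery V q → ValidTuple V t → ValidTuple V t' →
    s q t < s q t' →
    s (Function.update q j {t j}) t < s (Function.update q j {t j}) t'

/-- Monotonicity of the ranking function `s`. -/
def RankMonotonic (V : I → Finset α)
    (s : (I → Finset α) → (I → α) → ℝ) : Prop :=
  ∀ (q : I → Finset α) (i : I) (t t' : I → α),
    ValidQuery V q → ValidTuple V t → ValidTuple V t' →
    (∀ j, j ≠ i → t j = t' j) → t i ∈ q i → t' i ∉ q i →
    s q t < s q t'

/-- The linear ranking function with weights `w`. -/
noncomputable def linS [Fintype I] [DecidableEq α] (w : I → ℝ)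
    (q : I → Finset α) (t : I → α) : ℝ :=
  ∑ i, w i * (if t i ∈ q i then (0 : ℝ) else 1)

theorem RankAdditive.returns_update_self [DecidableEq I] {V : I → Finset α}
    {s : (I → Finset α) → (I → α) → ℝ} (hs : RankAdditive V s)
    {D : Finset (I → α)} (hD : ∀ t ∈ D, ValidTuple V t) {v : I → α} (hv : v ∈ D)
    {q : I → Finset α} (hq : ValidQuery V q) (hret : Returns s D q v) (j : I) :
    Returns s D (Function.update q j {v j}) v :=
  fun t ht htv => hs q v t j hq (hD v hv) (hD t ht) (hret t ht htv)

theorem differential_queries_general {I α : Type*} [DecidableEq I]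
    (V : I → Finset α)
    (s : (I → Finset α) → (I → α) → ℝ) (hs : RankAdditive V s)
    (D : Finset (I → α)) (hD : ∀ t ∈ D, ValidTuple V t)
    (v : I → α) (hv : v ∈ D)
    (j : I) (θ : α)
    (q : I → Finset α) (hq : ValidQuery V q)
    (hret : Returns s D q v)
    (q' : I → Finset α) (hq' : q' = Function.update q j {θ})
    (hnret : ¬ Returns s D q' v) :
    v j ≠ θ := by
  rintro rfl
  subst hq'
  exact hnret (hs.returns_update_self hD hv hq hret j)

/-- differential queries. If `q` returns `v` but the query `q'`
agreeing with `q` everywhere except attribute `j`, where `q' j = {θ}`, does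
not return `v`, then `v j ≠ θ`. -/
theorem differential_queries {I α : Type*} [Fintype I] [Nonempty I] [DecidableEq I]
    (V : I → Finset α) (hVne : ∀ i, (V i).Nonempty)
    (s : (I → Finset α) → (I → α) → ℝ) (hs : RankAdditive V s)
    (D : Finset (I → α)) (hD : ∀ t ∈ D, ValidTuple V t)
    (v : I → α) (hv : v ∈ D)
    (j : I) (θ : α) (hθ : θ ∈ V j)
    (q : I → Finset α) (hq : ValidQuery V q)
    (hret : Returns s D q v)
    (q' : I → Finset α) (hq' : q' = Function.update q j {θ})
    (hnret : ¬ Returns s D q' v) :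
    v j ≠ θ :=
  differential_queries_general V s hs D hD v hv j θ q hq hret q' hq' hnret
end

section
/- Suppose the ranking function s satisfies additivity. Let D be a finite database, v ∈ D, q a query that returns v, and t any tuple. Let j_1, …, j_h be an enumeration (without repetition) of exactly those attributes j ∈ I with q j ≠ {t j}. Define queries q_0 = q and, for i = 1, …, h, let q_i agree with q_{i−1} on every attribute except j_{h−i+1}, with q_i j_{h−i+1} = {t j_{h−i+1}} (so q_h is the point query of t). If q_h does not return v, then there exists an index i ∈ {0, …, h−1} such that q_i returns v, q_{i+1} does not return v, and moreover v j_{h−i} ≠ t j_{h−i}. (This is the correctness of one iteration of Algorithms Q&I-Point and Q&I-IN: a pair of adjacent queries in the constructed sequence forms differential queries and certifies that v differs from the inserted tuple t on the attribute on which they differ.) -/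
open Finset

variable {I α : Type*}

/-! Along the path `q = Q 0, …, Q h`, `v` is returned at the start but not at the end, so it
stops being returned at some step `Q i → Q (i + 1)`. That step replaces `Q i` on the attribute
`j` by `{t j}`; if `v j = t j`, additivity transfers every strict inequality `s (Q i) v < s (Q i) u`
to `Q (i + 1)`, so `Q (i + 1)` would still return `v`. Hence `v j ≠ t j`. -/

theorem Nat.exists_lt_and_not_succ {P : ℕ → Prop} {n : ℕ} (h0 : P 0) (hn : ¬ P n) :
    ∃ i < n, P i ∧ ¬ P (i + 1) := by
  classical
  have hle : Nat.findGreatest P n ≤ n := Nat.findGreatest_le n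
  have hP : P (Nat.findGreatest P n) := Nat.findGreatest_spec (zero_le n) h0
  have hlt : Nat.findGreatest P n < n :=
    lt_of_le_of_ne hle fun heq => hn (heq ▸ hP)
  exact ⟨_, hlt, hP, Nat.findGreatest_is_greatest (Nat.lt_succ_self _) hlt⟩

section Ranking

variable [DecidableEq I] {V : I → Finset α}

theorem ValidQuery.update_singleton {q : I → Finset α} {t : I → α} (hq : ValidQuery V q)
    (ht : ValidTuple V t) (j : I) : ValidQuery V (Function.update q j {t j}) := by
  intro i
  rcases eq_or_ne i j with rfl | hij
  · simpa using ht i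
  · simpa [Function.update_of_ne hij] using hq i

theorem Returns.update_singleton_self {s : (I → Finset α) → (I → α) → ℝ} {D : Finset (I → α)}
    {q : I → Finset α} {v : I → α} (hs : RankAdditive V s) (hD : ∀ u ∈ D, ValidTuple V u)
    (hq : ValidQuery V q) (hv : ValidTuple V v) (hret : Returns s D q v) (j : I) :
    Returns s D (Function.update q j {v j}) v :=
  fun u hu hne => hs q v u j hq hv (hD u hu) (hret u hu hne)

end Ranking

/-- correctness of one iteration of Q&I-Point / Q&I-IN.
Walking from `q` (which returns `v`) to the point query of `t` one attribute at
a time, if the final query does not return `v` then some adjacent pair forms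
differential queries certifying that `v` differs from `t` on the corresponding
attribute. -/
theorem adjacent_differential_pair {I α : Type*} [DecidableEq I]
    (V : I → Finset α)
    (s : (I → Finset α) → (I → α) → ℝ) (hs : RankAdditive V s)
    (D : Finset (I → α)) (hD : ∀ u ∈ D, ValidTuple V u)
    (v : I → α) (hvval : ValidTuple V v)
    (q : I → Finset α) (hq : ValidQuery V q) (hret : Returns s D q v)
    (t : I → α) (ht : ValidTuple V t)
    (h : ℕ) (js : Fin h → I)
    (Q : ℕ → (I → Finset α)) (hQ0 : Q 0 = q)
    (hQstep : ∀ i (hi : i < h),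
      Q (i + 1) = Function.update (Q i) (js ⟨h - 1 - i, by omega⟩)
        {t (js ⟨h - 1 - i, by omega⟩)})
    (hlast : ¬ Returns s D (Q h) v) :
    ∃ i, ∃ hi : i < h, Returns s D (Q i) v ∧ ¬ Returns s D (Q (i + 1)) v ∧
      v (js ⟨h - 1 - i, by omega⟩) ≠ t (js ⟨h - 1 - i, by omega⟩) := by
  have hQvalid : ∀ i ≤ h, ValidQuery V (Q i) := by
    intro i
    induction i with
    | zero => exact fun _ => hQ0 ▸ hq
    | succ i ih =>
      intro hi
      rw [hQstep i hi]
      exact (ih (by omega)).update_singleton ht _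
  obtain ⟨i, hi, hreti, hnreti⟩ :=
    Nat.exists_lt_and_not_succ (P := fun i => Returns s D (Q i) v) (hQ0 ▸ hret) hlast
  refine ⟨i, hi, hreti, hnreti, fun hvt => hnreti ?_⟩
  rw [hQstep i hi, ← hvt]
  exact hreti.update_singleton_self hs hD (hQvalid i hi.le) hvval _
end

section
/- Suppose the ranking function s satisfies monotonicity. Then for every query q and every tuple t' for which there exists at least one attribute j ∈ I with t' j ∉ q j, there exists a tuple t with t i ∈ q i for every i ∈ I and s q t < s q t'. (Every tuple not fully matching a query is strictly out-ranked by some fully matching tuple; proved by replacing the mismatched attribute values one at a time and applying monotonicity along the chain.) -/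
open Finset

variable {I α : Type*}

/- Fix a fully matching tuple `c`, which exists since every `q i` is nonempty, and
overwrite the mismatched attributes of `t'` with the values of `c` one at a time. Each overwrite
turns one mismatch into a match, so monotonicity makes the score drop strictly at every step. -/

section Repair

variable [DecidableEq I] {V : I → Finset α} {s : (I → Finset α) → (I → α) → ℝ}
  {q : I → Finset α} {u c : I → α}

theorem ValidTuple.piecewise (hc : ValidTuple V c) (hu : ValidTuple V u) (S : Finset I) :
    ValidTuple V (S.piecewise c u) :=
  fun i => S.piecewise_cases c u (fun x => x ∈ V i) (hc i) (hu i)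

theorem RankMonotonic.update_lt (hs : RankMonotonic V s) (hq : ValidQuery V q)
    (hu : ValidTuple V u) {j : I} (hj : u j ∉ q j) {x : α} (hx : x ∈ q j) :
    s q (Function.update u j x) < s q u := by
  have hvalid : ValidTuple V (Function.update u j x) := by
    intro i
    rcases eq_or_ne i j with rfl | hij
    · simpa using (hq i).2 hx
    · simpa [Function.update_of_ne hij] using hu i
  exact hs q j _ u hq hvalid hu (fun i hij => Function.update_of_ne hij _ _) (by simpa) hj

theorem RankMonotonic.piecewise_lt (hs : RankMonotonic V s) (hq : ValidQuery V q)
    (hc : ∀ i, c i ∈ q i) (hu : ValidTuple V u) {S : Finset I} (hS : S.Nonempty)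
    (hmiss : ∀ i ∈ S, u i ∉ q i) :
    s q (S.piecewise c u) < s q u := by
  have hcV : ValidTuple V c := fun i => (hq i).2 (hc i)
  induction hS using Nonempty.cons_induction with
  | singleton a =>
    rw [piecewise_singleton]
    exact hs.update_lt hq hu (hmiss a (mem_singleton_self a)) (hc a)
  | cons a S haS hS ih =>
    have hS_miss : ∀ i ∈ S, u i ∉ q i := fun i hi => hmiss i (mem_cons_of_mem hi)
    have ha_miss : S.piecewise c u a ∉ q a := by
      rw [piecewise_eq_of_notMem _ _ _ haS]
      exact hmiss a (mem_cons_self a S)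
    calc s q ((cons a S haS).piecewise c u)
        = s q (Function.update (S.piecewise c u) a (c a)) := by
          rw [cons_eq_insert, piecewise_insert]
      _ < s q (S.piecewise c u) := hs.update_lt hq (hcV.piecewise hu S) ha_miss (hc a)
      _ < s q u := ih hS_miss

end Repair

theorem mismatched_tuple_outranked_general {I α : Type*} [Fintype I]
    (V : I → Finset α)
    (s : (I → Finset α) → (I → α) → ℝ) (hs : RankMonotonic V s)
    (q : I → Finset α) (hq : ValidQuery V q)
    (t' : I → α) (ht' : ValidTuple V t')
    (hmiss : ∃ j, t' j ∉ q j) :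
    ∃ t : I → α, ValidTuple V t ∧ (∀ i, t i ∈ q i) ∧ s q t < s q t' := by
  classical
  choose c hc using fun i => (hq i).1
  let S := univ.filter fun i => t' i ∉ q i
  obtain ⟨j, hj⟩ := hmiss
  have hS : S.Nonempty := ⟨j, by simpa [S] using hj⟩
  refine ⟨S.piecewise c t', ValidTuple.piecewise (fun i => (hq i).2 (hc i)) ht' S, fun i => ?_,
    hs.piecewise_lt hq hc ht' hS (fun i hi => by simpa [S] using hi)⟩
  by_cases hi : i ∈ S
  · simpa [piecewise_eq_of_mem _ _ _ hi] using hc i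
  · simpa [piecewise_eq_of_notMem _ _ _ hi, S] using hi

/-- under monotonicity, every tuple not fully matching a query is
strictly out-ranked by some fully matching tuple. -/
theorem mismatched_tuple_outranked {I α : Type*} [Fintype I] [Nonempty I] [DecidableEq I]
    (V : I → Finset α) (hVne : ∀ i, (V i).Nonempty)
    (s : (I → Finset α) → (I → α) → ℝ) (hs : RankMonotonic V s)
    (q : I → Finset α) (hq : ValidQuery V q)
    (t' : I → α) (ht' : ValidTuple V t')
    (hmiss : ∃ j, t' j ∉ q j) :
    ∃ t : I → α, ValidTuple V t ∧ (∀ i, t i ∈ q i) ∧ s q t < s q t' :=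
  mismatched_tuple_outranked_general V s hs q hq t' ht' hmiss
end

section
/- Suppose the ranking function s satisfies monotonicity. Let D be a finite database, u ∈ D, and let q be the point query of u, i.e., q i = {u i} for every attribute i ∈ I. Then q returns u: s q u < s q t for every t ∈ D with t ≠ u. (This is the claim used in Algorithm Q&I-Point that the point query exactly matching a tuple ranks that tuple first, so if the final query q_h of the constructed sequence returns v instead of the inserted tuple t, then v and t must be identical.) -/
open Finset

variable {I α : Type*}

/-!
Set the attributes where `t` differs from `u` back to their values in `u`, one at a time. For
the point query of `u` each such attribute is one where `t` misses the query and the repaired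
tuple matches it, so by monotonicity every repair strictly lowers the score, ending at `u`.
-/

section Monotonic

variable {V : I → Finset α} {s : (I → Finset α) → (I → α) → ℝ} {q : I → Finset α}

theorem validQuery_singleton {u : I → α} (hu : ValidTuple V u) :
    ValidQuery V fun i => ({u i} : Finset α) :=
  fun i => ⟨singleton_nonempty _, singleton_subset_iff.2 (hu i)⟩

variable [DecidableEq I]

theorem ValidTuple.update {t : I → α} (ht : ValidTuple V t) {i : I} {x : α}
    (hx : x ∈ V i) : ValidTuple V (Function.update t i x) := by
  intro j
  rcases eq_or_ne j i with rfl | hji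
  · simpa using hx
  · simpa [Function.update_of_ne hji] using ht j

theorem RankMonotonic.score_update_lt (hs : RankMonotonic V s) (hq : ValidQuery V q)
    {t : I → α} (ht : ValidTuple V t) {i : I} {x : α} (hx : x ∈ q i) (hti : t i ∉ q i) :
    s q (Function.update t i x) < s q t :=
  hs q i _ t hq (ht.update ((hq i).2 hx)) ht
    (fun _ hj => Function.update_of_ne hj _ _) (by simpa using hx) hti

theorem RankMonotonic.score_lt_of_mismatch (hs : RankMonotonic V s) (hq : ValidQuery V q)
    {u : I → α} (hu : ValidTuple V u) (huq : ∀ i, u i ∈ q i) {S : Finset I}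
    (hS : S.Nonempty) : ∀ t : I → α, ValidTuple V t → (∀ i ∉ S, t i = u i) →
      (∀ i ∈ S, t i ∉ q i) → s q u < s q t := by
  induction hS using Finset.Nonempty.cons_induction with
  | singleton a =>
    intro t ht hout hin
    have hta : Function.update t a (u a) = u := by
      funext j
      rcases eq_or_ne j a with rfl | hja
      · simp
      · rw [Function.update_of_ne hja, hout j (by simpa using hja)]
    simpa [hta] using hs.score_update_lt hq ht (huq a) (hin a (mem_singleton_self a))
  | cons a S haS _ ih =>
    intro t ht hout hin
    set t' := Function.update t a (u a)
    have ht' : ValidTuple V t' := ht.update (hu a)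
    have hout' : ∀ i ∉ S, t' i = u i := by
      intro i hiS
      rcases eq_or_ne i a with rfl | hia
      · simp [t']
      · simpa [t', Function.update_of_ne hia] using hout i (by simp [hia, hiS])
    have hin' : ∀ i ∈ S, t' i ∉ q i := by
      intro i hiS
      have hia : i ≠ a := ne_of_mem_of_not_mem hiS haS
      simpa [t', Function.update_of_ne hia] using hin i (mem_cons_of_mem hiS)
    calc s q u < s q t' := ih t' ht' hout' hin'
      _ < s q t := hs.score_update_lt hq ht (huq a) (hin a (mem_cons_self a S))

end Monotonic

theorem point_query_returns_its_tuple_general {I α : Type*} [Fintype I]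
    [DecidableEq I]
    (V : I → Finset α)
    (s : (I → Finset α) → (I → α) → ℝ) (hs : RankMonotonic V s)
    (D : Finset (I → α)) (hD : ∀ t ∈ D, ValidTuple V t)
    (u : I → α) (hu : u ∈ D)
    (q : I → Finset α) (hq : q = fun i => ({u i} : Finset α)) :
    Returns s D q u := by
  classical
  subst hq
  intro t ht htu
  have hdiff : (univ.filter fun i => t i ≠ u i).Nonempty := by
    obtain ⟨i, hi⟩ := Function.ne_iff.1 htu
    exact ⟨i, by simpa using hi⟩
  refine (hs.score_lt_of_mismatch (validQuery_singleton (hD u hu)) (hD u hu)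
    (fun i => mem_singleton_self (u i)) hdiff) t (hD t ht) (by simp) (by simp)

/-- under monotonicity, the point query exactly matching a tuple
`u ∈ D` returns `u`. -/
theorem point_query_returns_its_tuple {I α : Type*} [Fintype I] [Nonempty I]
    [DecidableEq I]
    (V : I → Finset α) (hVne : ∀ i, (V i).Nonempty)
    (s : (I → Finset α) → (I → α) → ℝ) (hs : RankMonotonic V s)
    (D : Finset (I → α)) (hD : ∀ t ∈ D, ValidTuple V t)
    (u : I → α) (hu : u ∈ D)
    (q : I → Finset α) (hq : q = fun i => ({u i} : Finset α)) :
    Returns s D q u :=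
  point_query_returns_its_tuple_general V s hs D hD u hu q hq
end

section
/- The linear ranking function with positive weights satisfies additivity: for all queries q, all tuples t, t', and every attribute j ∈ I, if s q t < s q t', then s q' t < s q' t', where q' is the query agreeing with q on every attribute except j and with q' j = {t j}. -/
open Finset

variable {I α : Type*}

theorem mismatch_le_mismatch_add_mismatch_singleton [DecidableEq α] (A : Finset α) (x y : α) :
    (if y ∈ A then (0 : ℝ) else 1) ≤
      (if x ∈ A then (0 : ℝ) else 1) + (if y ∈ ({x} : Finset α) then (0 : ℝ) else 1) := by
  by_cases hyx : y = x
  · subst hyx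
    simp
  · rw [if_neg (Finset.notMem_singleton.mpr hyx)]
    split_ifs <;> norm_num

theorem linS_update_singleton_add_le [Fintype I] [DecidableEq I] [DecidableEq α] (w : I → ℝ)
    (q : I → Finset α) (t t' : I → α) (j : I) (hwj : 0 ≤ w j) :
    linS w (Function.update q j {t j}) t + linS w q t' ≤
      linS w q t + linS w (Function.update q j {t j}) t' := by
  unfold linS
  rw [← Finset.sum_add_distrib, ← Finset.sum_add_distrib]
  refine Finset.sum_le_sum fun i _ => ?_
  by_cases hij : i = j
  · subst hij
    have hle := mul_le_mul_of_nonneg_left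
      (mismatch_le_mismatch_add_mismatch_singleton (q i) (t i) (t' i)) hwj
    simp only [Function.update_self, Finset.mem_singleton_self, if_true, mul_zero, zero_add]
    linarith
  · rw [Function.update_of_ne hij]

theorem linear_ranking_additive_general {I α : Type*} [Fintype I] [DecidableEq I]
    [DecidableEq α]
    (V : I → Finset α)
    (w : I → ℝ) (hw : ∀ i, 0 < w i) :
    RankAdditive V (linS w) := by
  intro q t t' j _ _ _ hlt
  linarith [linS_update_singleton_add_le w q t t' j (hw j).le]

/-- the linear ranking function with positive weights satisfies
additivity. -/
theorem linear_ranking_additive {I α : Type*} [Fintype I] [Nonempty I] [DecidableEq I]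
    [DecidableEq α]
    (V : I → Finset α) (hVne : ∀ i, (V i).Nonempty)
    (w : I → ℝ) (hw : ∀ i, 0 < w i) :
    RankAdditive V (linS w) :=
  linear_ranking_additive_general V w hw
end

section
/- Let s be the linear ranking function with positive weights and let b ∈ I be an attribute. Assume the weight-gap condition: for all subsets S₁, S₂ ⊆ I \ {b} with S₁ ≠ S₂, |Σ_{i∈S₁} w i − Σ_{i∈S₂} w i| > w b. Let q be any query and let t, t' be tuples whose mismatch sets away from b differ, i.e., {j ∈ I : j ≠ b and t j ∉ q j} ≠ {j ∈ I : j ≠ b and t' j ∉ q j}. Then for all tuples u, u' agreeing with t, t' respectively on every attribute except possibly b: s q t < s q t' if and only if s q u < s q u'. (The relative rank of two such tuples is independent of their values on attribute b; this is the core of the proof of Theorem 3 on the infeasibility of rank-based inference for query-only adversaries.) -/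
open Finset

variable {I α : Type*}

/-!
The score `linS w q t` is the total weight of the mismatch set of `t` away from `b`, plus a
penalty at `b` lying in `[0, w b]`. Changing the value at `b` only changes the penalty, and by
the gap condition two different mismatch sets away from `b` have weights more than `w b` apart,
so the penalties can never reverse the comparison.
-/

theorem add_lt_add_iff_of_abs_sub_lt {G : Type*} [AddCommGroup G] [LinearOrder G]
    [IsOrderedAddMonoid G] {a b c d : G} (h : |c - d| < |a - b|) :
    a + c < b + d ↔ a < b := by
  refine ⟨fun hlt => lt_of_not_ge fun hba => hlt.not_gt ?_, fun hab => ?_⟩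
  · have : d - c < a - b := calc
      d - c ≤ |c - d| := abs_sub_comm c d ▸ le_abs_self _
      _ < a - b := by rwa [abs_of_nonneg (sub_nonneg.2 hba)] at h
    rwa [sub_lt_sub_iff, add_comm d] at this
  · have : c - d < b - a := calc
      c - d ≤ |c - d| := le_abs_self _
      _ < b - a := by rwa [abs_sub_comm a, abs_of_pos (sub_pos.2 hab)] at h
    rwa [sub_lt_sub_iff, add_comm c] at this

theorem linS_eq_sum_filter_add [Fintype I] [DecidableEq I] [DecidableEq α] (w : I → ℝ) (b : I)
    (q : I → Finset α) (t : I → α) :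
    linS w q t = ∑ i ∈ univ.filter (fun j => j ≠ b ∧ t j ∉ q j), w i
      + if t b ∈ q b then 0 else w b := by
  have hterm : ∀ i, w i * (if t i ∈ q i then (0 : ℝ) else 1) = if t i ∉ q i then w i else 0 := by
    intro i; split_ifs <;> simp_all
  rw [linS, ← sum_erase_add _ _ (mem_univ b)]
  simp only [hterm, ← sum_filter, filter_erase]
  rw [ite_not]
  congr 2
  ext j
  simp

theorem filter_mismatch_congr [Fintype I] [DecidableEq I] [DecidableEq α] {b : I} {t u : I → α}
    (q : I → Finset α) (h : ∀ i, i ≠ b → u i = t i) :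
    univ.filter (fun j => j ≠ b ∧ u j ∉ q j) = univ.filter (fun j => j ≠ b ∧ t j ∉ q j) :=
  filter_congr fun j _ => and_congr_right fun hj => by rw [h j hj]

theorem rank_independent_of_b_general {I α : Type*} [Fintype I] [DecidableEq I]
    [DecidableEq α]
    (w : I → ℝ) (hw : ∀ i, 0 < w i) (b : I)
    (hgap : ∀ S₁ S₂ : Finset I, b ∉ S₁ → b ∉ S₂ → S₁ ≠ S₂ →
      w b < |∑ i ∈ S₁, w i - ∑ i ∈ S₂, w i|)
    (q : I → Finset α)
    (t t' : I → α)
    (hdiff : (Finset.univ.filter fun j => j ≠ b ∧ t j ∉ q j) ≠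
             (Finset.univ.filter fun j => j ≠ b ∧ t' j ∉ q j))
    (u u' : I → α)
    (hut : ∀ i, i ≠ b → u i = t i) (hut' : ∀ i, i ≠ b → u' i = t' i) :
    (linS w q t < linS w q t' ↔ linS w q u < linS w q u') := by
  set A := ∑ i ∈ univ.filter (fun j => j ≠ b ∧ t j ∉ q j), w i
  set B := ∑ i ∈ univ.filter (fun j => j ≠ b ∧ t' j ∉ q j), w i
  have hAB : w b < |A - B| := hgap _ _ (by simp) (by simp) hdiff
  have hpenalty : ∀ x y : I → α,
      |(if x b ∈ q b then 0 else w b) - (if y b ∈ q b then 0 else w b)| < |A - B| := by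
    intro x y
    refine (abs_sub_le_of_nonneg_of_le ?_ ?_ ?_ ?_).trans_lt hAB <;>
      split_ifs <;> simp [(hw b).le]
  rw [linS_eq_sum_filter_add w b q t, linS_eq_sum_filter_add w b q t',
    linS_eq_sum_filter_add w b q u, linS_eq_sum_filter_add w b q u',
    filter_mismatch_congr q hut, filter_mismatch_congr q hut',
    add_lt_add_iff_of_abs_sub_lt (hpenalty t t'), add_lt_add_iff_of_abs_sub_lt (hpenalty u u')]

/-- under the weight-gap condition on attribute `b`, the relative
rank of two tuples whose mismatch sets away from `b` differ is independent of
their values on `b`. -/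
theorem rank_independent_of_b {I α : Type*} [Fintype I] [Nonempty I] [DecidableEq I]
    [DecidableEq α]
    (V : I → Finset α) (hVne : ∀ i, (V i).Nonempty)
    (w : I → ℝ) (hw : ∀ i, 0 < w i) (b : I)
    (hgap : ∀ S₁ S₂ : Finset I, b ∉ S₁ → b ∉ S₂ → S₁ ≠ S₂ →
      w b < |∑ i ∈ S₁, w i - ∑ i ∈ S₂, w i|)
    (q : I → Finset α) (hq : ValidQuery V q)
    (t t' : I → α) (ht : ValidTuple V t) (ht' : ValidTuple V t')
    (hdiff : (Finset.univ.filter fun j => j ≠ b ∧ t j ∉ q j) ≠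
             (Finset.univ.filter fun j => j ≠ b ∧ t' j ∉ q j))
    (u u' : I → α) (hu : ValidTuple V u) (hu' : ValidTuple V u')
    (hut : ∀ i, i ≠ b → u i = t i) (hut' : ∀ i, i ≠ b → u' i = t' i) :
    (linS w q t < linS w q t' ↔ linS w q u < linS w q u') :=
  rank_independent_of_b_general w hw b hgap q t t' hdiff u u' hut hut'
end

section
/- (Theorem 3 instantiation.) Suppose every attribute domain is Boolean, i.e., |V i| = 2 for all i ∈ I. Let s be the linear ranking function with positive weights, and let b ∈ I satisfy the weight-gap condition: for all subsets S₁, S₂ ⊆ I \ {b} with S₁ ≠ S₂, |Σ_{i∈S₁} w i − Σ_{i∈S₂} w i| > w b. Let D be a finite database in which any two distinct tuples differ on some attribute other than b, let v ∈ D, and let D' be obtained from D by replacing v with a tuple v' that agrees with v on every attribute except possibly b (so D' also has the property that any two distinct tuples differ on some attribute other than b). Then for every point query q: (i) there is a unique tuple of D minimizing s q, and likewise for D'; and (ii) q returns v over D if and only if q returns v' over D', and for every t ∈ D with t ≠ v, q returns t over D if and only if q returns t over D'. Hence the top-1 answer of every point query is unchanged by any modification of v's value on attribute b, so no query-only adversary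 can infer v b from point-query answers over such a database. -/
open Finset

variable {I α : Type*}

/-
The attributes other than `b` decide every comparison. For a point query over Boolean domains,
two tuples that differ at an attribute `j ≠ b` are matched by the query at `j` for exactly one of
them, so their sets of mismatched attributes away from `b` differ, and by the weight-gap condition
their partial scores over these sets differ by more than `w b`. The term contributed by `b` lies in
`[0, w b]`, so it can never reverse that order. Hence `linS` is injective on the database, and
changing `v` at `b` alone changes no comparison with any other tuple.
-/

theorem Finset.Nonempty.existsUnique_strictMin_of_injOn {β γ : Type*} [LinearOrder γ]
    {E : Finset β} (hE : E.Nonempty) {f : β → γ} (hf : Set.InjOn f E) :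
    ∃! a, a ∈ E ∧ ∀ t ∈ E, t ≠ a → f a < f t := by
  obtain ⟨a, haE, hmin⟩ := E.exists_min_image f hE
  have hstrict : ∀ t ∈ E, t ≠ a → f a < f t := fun t ht hta =>
    (hmin t ht).lt_of_ne fun h => hta (hf ht haE h.symm)
  refine ⟨a, ⟨haE, hstrict⟩, fun a' ⟨ha'E, hmin'⟩ => ?_⟩
  by_contra hne
  exact (hstrict a' ha'E hne).asymm (hmin' a haE (Ne.symm hne))

theorem Finset.eq_iff_ne_of_card_eq_two {β : Type*} {s : Finset β} (hs : #s = 2) {a x y : β}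
    (ha : a ∈ s) (hx : x ∈ s) (hy : y ∈ s) (hxy : x ≠ y) : x = a ↔ y ≠ a := by
  classical
  obtain ⟨c, d, -, hcd⟩ := card_eq_two.mp hs
  simp only [hcd, mem_insert, mem_singleton] at ha hx hy
  grind

section Replacement

variable {s : (I → Finset α) → (I → α) → ℝ} {D : Finset (I → α)} {q : I → Finset α}
  {t v v' : I → α} [DecidableEq (I → α)]

theorem returns_insert_iff :
    Returns s (insert v' D) q t ↔ (v' ≠ t → s q t < s q v') ∧ Returns s D q t :=
  forall_mem_insert ..

theorem returns_replace_self_iff (hv' : v' ∉ D.erase v)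
    (hcmp : ∀ t ∈ D.erase v, s q v < s q t ↔ s q v' < s q t) :
    Returns s D q v ↔ Returns s (insert v' (D.erase v)) q v' := by
  rw [returns_insert_iff]
  constructor
  · intro h
    refine ⟨fun h => absurd rfl h, fun t ht _ => ?_⟩
    exact (hcmp t ht).mp (h t (mem_of_mem_erase ht) (ne_of_mem_erase ht))
  · intro h t ht htv
    have ht' : t ∈ D.erase v := mem_erase.mpr ⟨htv, ht⟩
    exact (hcmp t ht').mpr (h.2 t ht' fun h => hv' (h ▸ ht'))

theorem returns_replace_iff_of_ne (hv : v ∈ D) (htv : t ≠ v) (htv' : t ≠ v')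
    (hcmp : s q t < s q v ↔ s q t < s q v') :
    Returns s D q t ↔ Returns s (insert v' (D.erase v)) q t := by
  conv_lhs => rw [← insert_erase hv]
  rw [returns_insert_iff, returns_insert_iff, hcmp]
  exact and_congr_left' ⟨fun h _ => h htv.symm, fun h _ => h htv'.symm⟩

end Replacement

def DiffersOff (b : I) (t t' : I → α) : Prop :=
  ∃ j, j ≠ b ∧ t j ≠ t' j

section Database

variable {b : I} {D : Finset (I → α)} {t t' v v' : I → α}

theorem DiffersOff.symm (h : DiffersOff b t t') : DiffersOff b t' t :=
  let ⟨j, hjb, hj⟩ := h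
  ⟨j, hjb, hj.symm⟩

theorem DiffersOff.irrefl : ¬DiffersOff b t t :=
  fun ⟨_, _, hj⟩ => hj rfl

theorem DiffersOff.of_agree_left (h : DiffersOff b v t) (hagree : ∀ i, i ≠ b → v' i = v i) :
    DiffersOff b v' t :=
  let ⟨j, hjb, hj⟩ := h
  ⟨j, hjb, hagree j hjb ▸ hj⟩

variable [DecidableEq (I → α)]

theorem notMem_erase_of_pairwise_differsOff (hD : (D : Set (I → α)).Pairwise (DiffersOff b))
    (hv : v ∈ D) (hagree : ∀ i, i ≠ b → v' i = v i) : v' ∉ D.erase v := fun h =>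
  DiffersOff.irrefl ((hD hv (mem_of_mem_erase h) (ne_of_mem_erase h).symm).of_agree_left hagree)

theorem pairwise_differsOff_replace (hD : (D : Set (I → α)).Pairwise (DiffersOff b))
    (hv : v ∈ D) (hagree : ∀ i, i ≠ b → v' i = v i) :
    (↑(insert v' (D.erase v)) : Set (I → α)).Pairwise (DiffersOff b) := by
  rw [coe_insert, Set.pairwise_insert]
  refine ⟨hD.mono (coe_subset.mpr (erase_subset v D)), fun t ht _ => ?_⟩
  have hv't : DiffersOff b v' t :=
    (hD hv (mem_of_mem_erase ht) (ne_of_mem_erase ht).symm).of_agree_left hagree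
  exact ⟨hv't, hv't.symm⟩

end Database

section Scoring

variable [Fintype I] [DecidableEq I] [DecidableEq α] {w : I → ℝ} {q : I → Finset α} {b : I}
  {t t' v v' : I → α}

def offMismatch (q : I → Finset α) (b : I) (t : I → α) : Finset I :=
  {i ∈ univ.erase b | t i ∉ q i}

noncomputable def offScore (w : I → ℝ) (q : I → Finset α) (b : I) (t : I → α) : ℝ :=
  ∑ i ∈ offMismatch q b t, w i

theorem linS_eq_offScore_add (w : I → ℝ) (q : I → Finset α) (b : I) (t : I → α) :
    linS w q t = offScore w q b t + w b * (if t b ∈ q b then 0 else 1) := by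
  rw [linS, ← sum_erase_add _ _ (mem_univ b), offScore, offMismatch, sum_filter]
  congr 1
  refine sum_congr rfl fun i _ => ?_
  split_ifs <;> simp

theorem offScore_le_linS (hwb : 0 ≤ w b) : offScore w q b t ≤ linS w q t := by
  rw [linS_eq_offScore_add w q b]
  split_ifs <;> simp [hwb]

theorem linS_le_offScore_add (hwb : 0 ≤ w b) : linS w q t ≤ offScore w q b t + w b := by
  rw [linS_eq_offScore_add w q b]
  split_ifs <;> simp [hwb]

theorem linS_lt_of_offScore_add_lt (hwb : 0 ≤ w b)
    (h : offScore w q b t + w b < offScore w q b t') : linS w q t < linS w q t' := by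
  linarith [linS_le_offScore_add (q := q) (t := t) hwb,
    offScore_le_linS (q := q) (t := t') hwb]

theorem linS_lt_iff_of_gap (hwb : 0 ≤ w b)
    (hgap : w b < |offScore w q b t - offScore w q b t'|) :
    linS w q t < linS w q t' ↔ offScore w q b t < offScore w q b t' := by
  rcases lt_abs.mp hgap with h | h
  · have := linS_lt_of_offScore_add_lt (t := t') (t' := t) hwb (by linarith)
    exact iff_of_false this.not_gt (by linarith)
  · exact iff_of_true (linS_lt_of_offScore_add_lt hwb (by linarith)) (by linarith)

theorem linS_ne_of_gap (hwb : 0 ≤ w b) (hgap : w b < |offScore w q b t - offScore w q b t'|) :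
    linS w q t ≠ linS w q t' := by
  rcases lt_abs.mp hgap with h | h
  · exact (linS_lt_of_offScore_add_lt hwb (by linarith)).ne'
  · exact (linS_lt_of_offScore_add_lt hwb (by linarith)).ne

theorem offMismatch_ne {V : I → Finset α} (hV : ∀ i, #(V i) = 2) (hq : ValidQuery V q)
    (hpt : ∀ i, ∃ a, q i = {a}) (ht : ValidTuple V t) (ht' : ValidTuple V t')
    (h : DiffersOff b t t') : offMismatch q b t ≠ offMismatch q b t' := by
  obtain ⟨j, hjb, hne⟩ := h
  obtain ⟨a, ha⟩ := hpt j
  have hmatch : t j = a ↔ t' j ≠ a :=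
    eq_iff_ne_of_card_eq_two (hV j) ((hq j).2 (by simp [ha])) (ht j) (ht' j) hne
  intro heq
  have hj : j ∈ offMismatch q b t ↔ j ∈ offMismatch q b t' := by rw [heq]
  simp only [offMismatch, mem_filter, mem_erase, mem_univ, ha, mem_singleton] at hj
  tauto

theorem offScore_gap_of_pairwise {V : I → Finset α} (hV : ∀ i, #(V i) = 2)
    (hgap : ∀ S₁ S₂ : Finset I, b ∉ S₁ → b ∉ S₂ → S₁ ≠ S₂ →
      w b < |∑ i ∈ S₁, w i - ∑ i ∈ S₂, w i|)
    (hq : ValidQuery V q) (hpt : ∀ i, ∃ a, q i = {a}) {E : Finset (I → α)}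
    (hval : ∀ t ∈ E, ValidTuple V t) (hpair : (E : Set (I → α)).Pairwise (DiffersOff b)) :
    ∀ t ∈ E, ∀ t' ∈ E, t ≠ t' → w b < |offScore w q b t - offScore w q b t'| :=
  fun t ht t' ht' hne => hgap _ _ (by simp [offMismatch]) (by simp [offMismatch])
    (offMismatch_ne hV hq hpt (hval t ht) (hval t' ht') (hpair ht ht' hne))

theorem existsUnique_linS_min (hwb : 0 ≤ w b) {E : Finset (I → α)} (hE : E.Nonempty)
    (hgap : ∀ t ∈ E, ∀ t' ∈ E, t ≠ t' → w b < |offScore w q b t - offScore w q b t'|) :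
    ∃! a, a ∈ E ∧ ∀ t ∈ E, t ≠ a → linS w q a < linS w q t :=
  hE.existsUnique_strictMin_of_injOn fun t ht t' ht' heq =>
    by_contra fun hne => linS_ne_of_gap hwb (hgap t ht t' ht' hne) heq

theorem offMismatch_congr (hagree : ∀ i, i ≠ b → v' i = v i) :
    offMismatch q b v' = offMismatch q b v :=
  filter_congr fun i hi => by rw [hagree i (ne_of_mem_erase hi)]

theorem offScore_congr (hagree : ∀ i, i ≠ b → v' i = v i) :
    offScore w q b v' = offScore w q b v := by
  rw [offScore, offScore, offMismatch_congr hagree]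

theorem linS_lt_iff_of_agree_left (hwb : 0 ≤ w b) (hagree : ∀ i, i ≠ b → v' i = v i)
    (hv : w b < |offScore w q b v - offScore w q b t|)
    (hv' : w b < |offScore w q b v' - offScore w q b t|) :
    linS w q v < linS w q t ↔ linS w q v' < linS w q t := by
  rw [linS_lt_iff_of_gap hwb hv, linS_lt_iff_of_gap hwb hv', offScore_congr hagree]

theorem linS_lt_iff_of_agree_right (hwb : 0 ≤ w b) (hagree : ∀ i, i ≠ b → v' i = v i)
    (hv : w b < |offScore w q b t - offScore w q b v|)
    (hv' : w b < |offScore w q b t - offScore w q b v'|) :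
    linS w q t < linS w q v ↔ linS w q t < linS w q v' := by
  rw [linS_lt_iff_of_gap hwb hv, linS_lt_iff_of_gap hwb hv', offScore_congr hagree]

end Scoring

theorem qonly_infeasibility_general {I α : Type*} [Fintype I] [DecidableEq I]
    [DecidableEq α]
    (V : I → Finset α) (hV2 : ∀ i, (V i).card = 2)
    (w : I → ℝ) (hw : ∀ i, 0 < w i) (b : I)
    (hgap : ∀ S₁ S₂ : Finset I, b ∉ S₁ → b ∉ S₂ → S₁ ≠ S₂ →
      w b < |∑ i ∈ S₁, w i - ∑ i ∈ S₂, w i|)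
    (D : Finset (I → α)) (hDval : ∀ t ∈ D, ValidTuple V t)
    (hDdist : ∀ t ∈ D, ∀ t' ∈ D, t ≠ t' → ∃ j, j ≠ b ∧ t j ≠ t' j)
    (v : I → α) (hv : v ∈ D)
    (v' : I → α) (hv'val : ValidTuple V v') (hagree : ∀ i, i ≠ b → v' i = v i)
    (D' : Finset (I → α)) [DecidableEq (I → α)] (hD' : D' = insert v' (D.erase v))
    (q : I → Finset α) (hq : ValidQuery V q) (hpt : ∀ i, ∃ a, q i = {a}) :
    ((∃! a, a ∈ D ∧ ∀ t ∈ D, t ≠ a → linS w q a < linS w q t) ∧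
     (∃! a, a ∈ D' ∧ ∀ t ∈ D', t ≠ a → linS w q a < linS w q t)) ∧
    (Returns (linS w) D q v ↔ Returns (linS w) D' q v') ∧
    (∀ t ∈ D, t ≠ v → (Returns (linS w) D q t ↔ Returns (linS w) D' q t)) := by
  have hwb := (hw b).le
  have hDpair : (D : Set (I → α)).Pairwise (DiffersOff b) := hDdist
  have hv'D := notMem_erase_of_pairwise_differsOff hDpair hv hagree
  have hD'val : ∀ t ∈ D', ValidTuple V t := by
    rw [hD', forall_mem_insert]
    exact ⟨hv'val, fun t ht => hDval t (mem_of_mem_erase ht)⟩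
  have gapD := offScore_gap_of_pairwise hV2 hgap hq hpt hDval hDpair
  have gapD' := offScore_gap_of_pairwise hV2 hgap hq hpt hD'val
    (hD' ▸ pairwise_differsOff_replace hDpair hv hagree)
  subst hD'
  refine ⟨⟨existsUnique_linS_min hwb ⟨v, hv⟩ gapD,
    existsUnique_linS_min hwb (insert_nonempty _ _) gapD'⟩,
    returns_replace_self_iff hv'D fun t ht => ?_, fun t ht htv => ?_⟩
  · exact linS_lt_iff_of_agree_left hwb hagree
      (gapD v hv t (mem_of_mem_erase ht) (ne_of_mem_erase ht).symm)
      (gapD' v' (mem_insert_self _ _) t (mem_insert_of_mem ht) fun h => hv'D (h ▸ ht))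
  · have ht' : t ∈ D.erase v := mem_erase.mpr ⟨htv, ht⟩
    have htv' : t ≠ v' := fun h => hv'D (h ▸ ht')
    exact returns_replace_iff_of_ne hv htv htv' (linS_lt_iff_of_agree_right hwb hagree
      (gapD t ht v hv htv) (gapD' t (mem_insert_of_mem ht') v' (mem_insert_self _ _) htv'))

/-- Theorem 3 instantiation: with Boolean domains, the weight-gap
condition on `b`, and a database whose tuples pairwise differ away from `b`,
the top-1 answer of every point query is unchanged when `v` is replaced by a
tuple `v'` agreeing with `v` except possibly on `b`. -/
theorem qonly_infeasibility {I α : Type*} [Fintype I] [Nonempty I] [DecidableEq I]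
    [DecidableEq α]
    (V : I → Finset α) (hV2 : ∀ i, (V i).card = 2)
    (w : I → ℝ) (hw : ∀ i, 0 < w i) (b : I)
    (hgap : ∀ S₁ S₂ : Finset I, b ∉ S₁ → b ∉ S₂ → S₁ ≠ S₂ →
      w b < |∑ i ∈ S₁, w i - ∑ i ∈ S₂, w i|)
    (D : Finset (I → α)) (hDval : ∀ t ∈ D, ValidTuple V t)
    (hDdist : ∀ t ∈ D, ∀ t' ∈ D, t ≠ t' → ∃ j, j ≠ b ∧ t j ≠ t' j)
    (v : I → α) (hv : v ∈ D)
    (v' : I → α) (hv'val : ValidTuple V v') (hagree : ∀ i, i ≠ b → v' i = v i)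
    (D' : Finset (I → α)) [DecidableEq (I → α)] (hD' : D' = insert v' (D.erase v))
    (q : I → Finset α) (hq : ValidQuery V q) (hpt : ∀ i, ∃ a, q i = {a}) :
    ((∃! a, a ∈ D ∧ ∀ t ∈ D, t ≠ a → linS w q a < linS w q t) ∧
     (∃! a, a ∈ D' ∧ ∀ t ∈ D', t ≠ a → linS w q a < linS w q t)) ∧
    (Returns (linS w) D q v ↔ Returns (linS w) D' q v') ∧
    (∀ t ∈ D, t ≠ v → (Returns (linS w) D q t ↔ Returns (linS w) D' q t)) :=
  qonly_infeasibility_general V hV2 w hw b hgap D hDval hDdist v hv v' hv'val hagree D' hD' q hq hpt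
end
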